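/- arXiv:1103.5251 — 4 statements merged into one kernel-verified Lean document; each statement's English description precedes it below -/
import Mathlib

section
/- In a preabelian category, a pushout of a semi-stable kernel is a semi-stable kernel, and a pullback of a semi-stable cokernel is a semi-stable cokernel. -/
open CategoryTheory CategoryTheory.Limits

universe v u

variable {C : Type u} [Category.{v} C] [Preadditive C] [HasKernels C] [HasCokernels C]

/-- A morphism arises as a kernel of some morphism. -/
def IsKernelMor {X Y : C} (f : X ⟶ Y) : Prop :=
  ∃ (Z : C) (g : Y ⟶ Z) (w : f ≫ g = 0), Nonempty (IsLimit (KernelFork.ofι f w))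

/-- A morphism arises as a cokernel of some morphism. -/
def IsCokernelMor {X Y : C} (f : X ⟶ Y) : Prop :=
  ∃ (W : C) (g : W ⟶ X) (w : g ≫ f = 0), Nonempty (IsColimit (CokernelCofork.ofπ f w))

/-- A semi-stable kernel: a kernel all of whose pushouts are kernels. -/
def SemiStableKernelMor {X Y : C} (f : X ⟶ Y) : Prop :=
  IsKernelMor f ∧ ∀ {X' P : C} (g : X ⟶ X') (h : Y ⟶ P) (i : X' ⟶ P),
    IsPushout f g h i → IsKernelMor i

/-- A semi-stable cokernel: a cokernel all of whose pullbacks are cokernels. -/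
def SemiStableCokernelMor {X Y : C} (f : X ⟶ Y) : Prop :=
  IsCokernelMor f ∧ ∀ {Y' P : C} (g : Y' ⟶ Y) (fst : P ⟶ X) (snd : P ⟶ Y'),
    IsPullback fst snd f g → IsCokernelMor snd

/-- Exactness at the middle object: `im a = ker b`. -/
def ExactAtMor {A B D : C} (a : A ⟶ B) (b : B ⟶ D) : Prop :=
  ∃ w : Abelian.image.ι a ≫ b = 0, Nonempty (IsLimit (KernelFork.ofι (Abelian.image.ι a) w))

theorem SemiStableKernelMor.of_isPushout {C : Type*} [Category C] [Preadditive C]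
    {X Y X' P : C} {f : X ⟶ Y} {g : X ⟶ X'} {h : Y ⟶ P} {i : X' ⟶ P}
    (hf : SemiStableKernelMor f) (sq : IsPushout f g h i) : SemiStableKernelMor i :=
  ⟨hf.2 g h i sq, fun _ _ _ sq' => hf.2 _ _ _ (sq.paste_vert sq')⟩

theorem SemiStableCokernelMor.of_isPullback {C : Type*} [Category C] [Preadditive C]
    {X Y Y' P : C} {f : X ⟶ Y} {g : Y' ⟶ Y} {fst : P ⟶ X} {snd : P ⟶ Y'}
    (hf : SemiStableCokernelMor f) (sq : IsPullback fst snd f g) : SemiStableCokernelMor snd :=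
  ⟨hf.2 g fst snd sq, fun _ _ _ sq' => hf.2 _ _ _ (sq'.paste_horiz sq)⟩

/-- A pushout of a semi-stable kernel is a semi-stable kernel; a pullback of a
semi-stable cokernel is a semi-stable cokernel. -/
theorem stmt_5 :
    (∀ {X Y X' P : C} (f : X ⟶ Y) (g : X ⟶ X') (h : Y ⟶ P) (i : X' ⟶ P),
      SemiStableKernelMor f → IsPushout f g h i → SemiStableKernelMor i) ∧
    (∀ {X Y Y' P : C} (f : X ⟶ Y) (g : Y' ⟶ Y) (fst : P ⟶ X) (snd : P ⟶ Y'),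
      SemiStableCokernelMor f → IsPullback fst snd f g → SemiStableCokernelMor snd) :=
  ⟨fun _ _ _ _ hf sq => hf.of_isPushout sq, fun _ _ _ _ hf sq => hf.of_isPullback sq⟩
end

section
/- In a P-semi-abelian category, if a composite g ∘ f is a kernel then f is a kernel; dually, if g ∘ f is a cokernel then g is a cokernel. -/
open CategoryTheory CategoryTheory.Limits

universe v u

variable {C : Type u} [Category.{v} C] [Preadditive C] [HasKernels C] [HasCokernels C]

/-!
A kernel is a strong monomorphism, and a left factor of a strong monomorphism is again one.
Factor `f = e ≫ ι` through its image `ι = ker (coker f)`. In a P-semi-abelian category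
`e = coimage.π f ≫ coimageImageComparison f` is epic; as a left factor of the strong mono `f` it is
also a strong mono, hence an isomorphism, so `f` is isomorphic to the kernel `ι`.
The cokernel half is dual.
-/

section NormalMorphisms

omit [HasKernels C] [HasCokernels C]

variable {X Y : C}

theorem isKernelMor_iff_nonempty_normalMono (f : X ⟶ Y) :
    IsKernelMor f ↔ Nonempty (NormalMono f) :=
  ⟨fun ⟨_, g, w, ⟨hf⟩⟩ => ⟨⟨_, g, w, hf⟩⟩, fun ⟨hf⟩ => ⟨_, hf.g, hf.w, ⟨hf.isLimit⟩⟩⟩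

theorem isCokernelMor_iff_nonempty_normalEpi (f : X ⟶ Y) :
    IsCokernelMor f ↔ Nonempty (NormalEpi f) :=
  ⟨fun ⟨_, g, w, ⟨hf⟩⟩ => ⟨⟨_, g, w, hf⟩⟩, fun ⟨hf⟩ => ⟨_, hf.g, hf.w, ⟨hf.isColimit⟩⟩⟩

theorem IsKernelMor.strongMono {f : X ⟶ Y} (hf : IsKernelMor f) : StrongMono f := by
  obtain ⟨_⟩ := (isKernelMor_iff_nonempty_normalMono f).1 hf
  infer_instance

theorem IsCokernelMor.strongEpi {f : X ⟶ Y} (hf : IsCokernelMor f) : StrongEpi f := by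
  obtain ⟨_⟩ := (isCokernelMor_iff_nonempty_normalEpi f).1 hf
  infer_instance

theorem IsKernelMor.of_arrow_iso {X' Y' : C} {f : X ⟶ Y} {f' : X' ⟶ Y'} (hf : IsKernelMor f)
    (e : Arrow.mk f ≅ Arrow.mk f') : IsKernelMor f' := by
  obtain ⟨hf⟩ := (isKernelMor_iff_nonempty_normalMono f).1 hf
  exact (isKernelMor_iff_nonempty_normalMono f').2 ⟨hf.ofArrowIso e⟩

theorem IsCokernelMor.of_arrow_iso {X' Y' : C} {f : X ⟶ Y} {f' : X' ⟶ Y'} (hf : IsCokernelMor f)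
    (e : Arrow.mk f ≅ Arrow.mk f') : IsCokernelMor f' := by
  obtain ⟨hf⟩ := (isCokernelMor_iff_nonempty_normalEpi f).1 hf
  exact (isCokernelMor_iff_nonempty_normalEpi f').2 ⟨hf.ofArrowIso e⟩

end NormalMorphisms

section Images

variable {X Y : C}

theorem isKernelMor_image_ι (f : X ⟶ Y) : IsKernelMor (Abelian.image.ι f) :=
  ⟨_, cokernel.π f, kernel.condition _, ⟨kernelIsKernel _⟩⟩

theorem isCokernelMor_coimage_π (f : X ⟶ Y) : IsCokernelMor (Abelian.coimage.π f) :=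
  ⟨_, kernel.ι f, cokernel.condition _, ⟨cokernelIsCokernel _⟩⟩

theorem coimage_π_comp_coimageImageComparison (f : X ⟶ Y) :
    Abelian.coimage.π f ≫ Abelian.coimageImageComparison f = Abelian.factorThruImage f := by
  ext; simp

theorem coimageImageComparison_comp_image_ι (f : X ⟶ Y) :
    Abelian.coimageImageComparison f ≫ Abelian.image.ι f = Abelian.factorThruCoimage f := by
  ext; simp

theorem isKernelMor_of_strongMono (f : X ⟶ Y) [StrongMono f]
    [Epi (Abelian.coimageImageComparison f)] : IsKernelMor f := by
  have : Epi (Abelian.factorThruImage f) := by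
    rw [← coimage_π_comp_coimageImageComparison]; exact epi_comp _ _
  have : StrongMono (Abelian.factorThruImage f) := by
    have : StrongMono (Abelian.factorThruImage f ≫ Abelian.image.ι f) := by
      rwa [Abelian.image.fac]
    exact strongMono_of_strongMono _ (Abelian.image.ι f)
  have := isIso_of_epi_of_strongMono (Abelian.factorThruImage f)
  exact (isKernelMor_image_ι f).of_arrow_iso
    (Arrow.isoMk (asIso (Abelian.factorThruImage f)).symm (Iso.refl _) (by simp))

theorem isCokernelMor_of_strongEpi (f : X ⟶ Y) [StrongEpi f]
    [Mono (Abelian.coimageImageComparison f)] : IsCokernelMor f := by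
  have : Mono (Abelian.factorThruCoimage f) := by
    rw [← coimageImageComparison_comp_image_ι]; exact mono_comp _ _
  have : StrongEpi (Abelian.factorThruCoimage f) := by
    have : StrongEpi (Abelian.coimage.π f ≫ Abelian.factorThruCoimage f) := by
      rwa [Abelian.coimage.fac]
    exact strongEpi_of_strongEpi (Abelian.coimage.π f) _
  have := isIso_of_mono_of_strongEpi (Abelian.factorThruCoimage f)
  exact (isCokernelMor_coimage_π f).of_arrow_iso
    (Arrow.isoMk (Iso.refl _) (asIso (Abelian.factorThruCoimage f)) (by simp))

end Images

/-- In a P-semi-abelian category, if `g ∘ f` is a kernel then `f` is a kernel;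
dually, if `g ∘ f` is a cokernel then `g` is a cokernel. -/
theorem stmt_7
    (hP : ∀ {X Y : C} (α : X ⟶ Y),
      Mono (Abelian.coimageImageComparison α) ∧ Epi (Abelian.coimageImageComparison α))
    {X Y Z : C} (f : X ⟶ Y) (g : Y ⟶ Z) :
    (IsKernelMor (f ≫ g) → IsKernelMor f) ∧
    (IsCokernelMor (f ≫ g) → IsCokernelMor g) := by
  refine ⟨fun hfg => ?_, fun hfg => ?_⟩
  · have := hfg.strongMono
    have := strongMono_of_strongMono f g
    have := (hP f).2
    exact isKernelMor_of_strongMono f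
  · have := hfg.strongEpi
    have := strongEpi_of_strongEpi f g
    have := (hP g).1
    exact isCokernelMor_of_strongEpi g
end

section
/- In a P-semi-abelian category, if g ∘ f is strict and g is a monomorphism, then f is strict. -/
/-!
The square with sides `𝟙 X` and `g` from `f` to `f ≫ g` induces, by functoriality of the
coimage-image comparison, a commutative square whose left side `coimage f ⟶ coimage (f ≫ g)` is
an isomorphism because `g` is mono (so `ker f = ker (f ≫ g)`). If the comparison map of `f ≫ g`
is an isomorphism, the comparison map of `f` is therefore a split monomorphism; in a
P-semi-abelian category it is also an epimorphism, hence an isomorphism.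
-/

open CategoryTheory CategoryTheory.Limits

universe v u

variable {C : Type u} [Category.{v} C] [Preadditive C] [HasKernels C] [HasCokernels C]

theorem CategoryTheory.isSplitMono_of_isSplitMono_comp {𝒜 : Type*} [Category 𝒜] {X Y Z : 𝒜}
    (f : X ⟶ Y) (g : Y ⟶ Z) [IsSplitMono (f ≫ g)] : IsSplitMono f :=
  IsSplitMono.mk' ⟨g ≫ retraction (f ≫ g), by rw [← Category.assoc, IsSplitMono.id]⟩

namespace CategoryTheory.Abelian

variable {𝒜 : Type*} [Category 𝒜] [HasZeroMorphisms 𝒜] [HasKernels 𝒜] [HasCokernels 𝒜]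
  {X Y Z : 𝒜} (f : X ⟶ Y) (g : Y ⟶ Z)

noncomputable abbrev coimageToCoimageComp : Abelian.coimage f ⟶ Abelian.coimage (f ≫ g) :=
  cokernel.map (kernel.ι f) (kernel.ι (f ≫ g)) (kernel.map f (f ≫ g) (𝟙 X) g (by simp)) (𝟙 X)
    (by simp)

noncomputable abbrev imageToImageComp : Abelian.image f ⟶ Abelian.image (f ≫ g) :=
  kernel.map (cokernel.π f) (cokernel.π (f ≫ g)) g (cokernel.map f (f ≫ g) (𝟙 X) g (by simp))
    (by simp)

theorem coimageImageComparison_comp_imageToImageComp :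
    coimageImageComparison f ≫ imageToImageComp f g =
      coimageToCoimageComp f g ≫ coimageImageComparison (f ≫ g) :=
  (coimageImageComparisonFunctor.map (Arrow.homMk' (𝟙 X) g : Arrow.mk f ⟶ _)).w.symm

theorem isSplitMono_coimageImageComparison_of_comp_mono [Mono g]
    [IsIso (coimageImageComparison (f ≫ g))] : IsSplitMono (coimageImageComparison f) := by
  have : IsSplitMono (coimageImageComparison f ≫ imageToImageComp f g) := by
    rw [coimageImageComparison_comp_imageToImageComp]
    infer_instance
  exact isSplitMono_of_isSplitMono_comp _ (imageToImageComp f g)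

end CategoryTheory.Abelian

/-- In a P-semi-abelian category, if `g ∘ f` is strict and `g` is a monomorphism,
then `f` is strict. -/
theorem stmt_9
    (hP : ∀ {X Y : C} (α : X ⟶ Y),
      Mono (Abelian.coimageImageComparison α) ∧ Epi (Abelian.coimageImageComparison α))
    {X Y Z : C} (f : X ⟶ Y) (g : Y ⟶ Z)
    (hstrict : IsIso (Abelian.coimageImageComparison (f ≫ g))) (hg : Mono g) :
    IsIso (Abelian.coimageImageComparison f) := by
  have := (hP f).2
  have := Abelian.isSplitMono_coimageImageComparison_of_comp_mono f g
  exact isIso_of_epi_of_isSplitMono _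
end

section
/- (Two-Square Lemma, existence part) Given a commutative diagram with exact rows A →ψ B →φ C, A' →ψ' B' →φ' C' and vertical morphisms α : A → A', β : B → B', γ : C → C' in a preabelian category, let (Q', σ : Q' → C, σ' : Q' → B') be the pullback of γ and φ', and let (Q, τ : B → Q, τ' : A' → Q) be the pushout of ψ and α. Then: (i) there exists a unique θ : Q → B' with θ ∘ τ = β and θ ∘ τ' = ψ'; (ii) there exists a unique ρ : B → Q' with σ ∘ ρ = φ and σ' ∘ ρ = β; (iii) there exists a unique η : Q → Q' with η ∘ τ = ρ, σ' ∘ η = θ, and σ ∘ η ∘ τ' = 0. -/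
open CategoryTheory CategoryTheory.Limits

universe v u

variable {C : Type u} [Category.{v} C] [Preadditive C] [HasKernels C] [HasCokernels C]

theorem ExactAtMor.comp_eq_zero {A B D : C} {a : A ⟶ B} {b : B ⟶ D} (h : ExactAtMor a b) :
    a ≫ b = 0 := by
  obtain ⟨w, -⟩ := h
  rw [← Abelian.image.fac a, Category.assoc, w, comp_zero]

section

variable {𝒞 : Type*} [Category 𝒞]

theorem CategoryTheory.IsPushout.existsUnique_desc {Z X Y P W : 𝒞} {f : Z ⟶ X} {g : Z ⟶ Y}
    {inl : X ⟶ P} {inr : Y ⟶ P} (hP : IsPushout f g inl inr) {h : X ⟶ W} {k : Y ⟶ W}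
    (w : f ≫ h = g ≫ k) : ∃! θ : P ⟶ W, inl ≫ θ = h ∧ inr ≫ θ = k :=
  ⟨hP.desc h k w, ⟨hP.inl_desc h k w, hP.inr_desc h k w⟩, fun θ ⟨hl, hr⟩ =>
    hP.hom_ext (by rw [hl, hP.inl_desc]) (by rw [hr, hP.inr_desc])⟩

theorem CategoryTheory.IsPullback.existsUnique_lift {P X Y Z W : 𝒞} {fst : P ⟶ X} {snd : P ⟶ Y}
    {f : X ⟶ Z} {g : Y ⟶ Z} (hP : IsPullback fst snd f g) {h : W ⟶ X} {k : W ⟶ Y}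
    (w : h ≫ f = k ≫ g) : ∃! ρ : W ⟶ P, ρ ≫ fst = h ∧ ρ ≫ snd = k :=
  ⟨hP.lift h k w, ⟨hP.lift_fst h k w, hP.lift_snd h k w⟩, fun ρ ⟨hf, hs⟩ =>
    hP.hom_ext (by rw [hf, hP.lift_fst]) (by rw [hs, hP.lift_snd])⟩

/-- `η` is induced on the pushout by `ρ` and the map `g : A' ⟶ Q'` that the pullback induces from
`0` and `ψ'`: given `τ ≫ η = ρ`, the two conditions on `η` amount to `τ' ≫ η = g`. -/
theorem existsUnique_pushout_to_pullback [HasZeroMorphisms 𝒞]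
    {A B D A' B' D' Q Q' : 𝒞} {ψ : A ⟶ B} {φ : B ⟶ D} {α : A ⟶ A'} {β : B ⟶ B'} {γ : D ⟶ D'}
    {ψ' : A' ⟶ B'} {φ' : B' ⟶ D'} {σ : Q' ⟶ D} {σ' : Q' ⟶ B'} {τ : B ⟶ Q} {τ' : A' ⟶ Q}
    (hc₁ : ψ ≫ β = α ≫ ψ') (hψφ : ψ ≫ φ = 0) (hψ'φ' : ψ' ≫ φ' = 0)
    (hpb : IsPullback σ σ' γ φ') (hpo : IsPushout ψ α τ τ')
    {θ : Q ⟶ B'} {ρ : B ⟶ Q'} (hθτ : τ ≫ θ = β) (hθτ' : τ' ≫ θ = ψ')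
    (hρσ : ρ ≫ σ = φ) (hρσ' : ρ ≫ σ' = β) :
    ∃! η : Q ⟶ Q', τ ≫ η = ρ ∧ η ≫ σ' = θ ∧ τ' ≫ η ≫ σ = 0 := by
  obtain ⟨g, ⟨hgσ, hgσ'⟩, -⟩ :=
    hpb.existsUnique_lift (h := 0) (k := ψ') (by rw [hψ'φ', zero_comp])
  have hcomm : ψ ≫ ρ = α ≫ g := hpb.hom_ext
    (by rw [Category.assoc, hρσ, hψφ, Category.assoc, hgσ, comp_zero])
    (by rw [Category.assoc, hρσ', hc₁, Category.assoc, hgσ'])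
  refine (existsUnique_congr fun η => ?_).mpr (hpo.existsUnique_desc hcomm)
  refine and_congr_right fun hητ => ⟨fun ⟨hησ', hησ⟩ => ?_, fun hητ' => ⟨?_, ?_⟩⟩
  · exact hpb.hom_ext (by rw [Category.assoc, hησ, hgσ])
      (by rw [Category.assoc, hησ', hθτ', hgσ'])
  · exact hpo.hom_ext (by rw [← Category.assoc, hητ, hρσ', hθτ])
      (by rw [← Category.assoc, hητ', hgσ', hθτ'])
  · rw [← Category.assoc, hητ', hgσ]

end

section TwoSquare

variable {A B D A' B' D' Q Q' : C}
variable {ψ : A ⟶ B} {φ : B ⟶ D} {α : A ⟶ A'} {β : B ⟶ B'} {γ : D ⟶ D'}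
variable {ψ' : A' ⟶ B'} {φ' : B' ⟶ D'}
variable {σ : Q' ⟶ D} {σ' : Q' ⟶ B'} {τ : B ⟶ Q} {τ' : A' ⟶ Q}

/-- Two-Square Lemma, existence part: given the commutative diagram with exact rows, the
pullback `(Q', σ, σ')` of `(γ, φ')` and the pushout `(Q, τ, τ')` of `(ψ, α)`, there exist
unique `θ : Q ⟶ B'`, `ρ : B ⟶ Q'` and `η : Q ⟶ Q'` with the stated properties. -/
theorem stmt_11
    (hc₁ : ψ ≫ β = α ≫ ψ') (hc₂ : φ ≫ γ = β ≫ φ')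
    (hrow₁ : ExactAtMor ψ φ) (hrow₂ : ExactAtMor ψ' φ')
    (hpb : IsPullback σ σ' γ φ') (hpo : IsPushout ψ α τ τ') :
    (∃! θ : Q ⟶ B', τ ≫ θ = β ∧ τ' ≫ θ = ψ') ∧
    (∃! ρ : B ⟶ Q', ρ ≫ σ = φ ∧ ρ ≫ σ' = β) ∧
    (∀ (θ : Q ⟶ B') (ρ : B ⟶ Q'),
      τ ≫ θ = β → τ' ≫ θ = ψ' → ρ ≫ σ = φ → ρ ≫ σ' = β →
        ∃! η : Q ⟶ Q', τ ≫ η = ρ ∧ η ≫ σ' = θ ∧ τ' ≫ η ≫ σ = 0) := by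
  exact ⟨hpo.existsUnique_desc hc₁, hpb.existsUnique_lift hc₂, fun _ _ =>
    existsUnique_pushout_to_pullback hc₁ hrow₁.comp_eq_zero hrow₂.comp_eq_zero hpb hpo⟩

end TwoSquare
end
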